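/- arXiv:2603.23628 — 4 statements merged into one kernel-verified Lean document; each statement's English description precedes it below -/
import Mathlib

section
/- Fix integers d ≥ 2, N ≥ 1, K ≥ 1. Let J be a complex matrix indexed by pairs ((x,o),(x',o')) with x,x' : Fin N → Fin d and o,o' : Fin K → Fin d. If J is positive semidefinite and Tr_O(J) equals the identity matrix on (Fin N → Fin d), then Tr(J · Π_sym^{(N+K)}) ≤ d_S^N = binom(N+d-1, d-1). Equivalently, the average fidelity Tr(J · Π_sym^{(N+K)}/d_S^{N+K}) of any quantum channel (with Choi operator J) for converting N copies of a pure qudit state into K copies of its transpose is at most d_S^N / d_S^{N+K}. -/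
/-!
Write `P = Π_sym^{(N)} ⊗ 1` and `Q = Π_sym^{(N+K)}`. Averaging over the permutations of the first
`N` tensor factors gives `P`, and each of them fixes `Q`, so `P Q = Q`; as both are orthogonal
projections, so is `P - Q`, whence `Tr(J (P - Q)) = Tr((P - Q) J (P - Q)) ≥ 0`. Moreover
`Tr(J P) = Tr(Tr_O(J) Π_sym^{(N)}) = Tr Π_sym^{(N)}`, and `Tr R(π)` counts the tuples fixed by `π`,
so by Burnside's lemma `Tr Π_sym^{(N)}` is the number of orbits of `S_N` on `Fin N → Fin d`, i.e.
the number of multisets of size `N` in `Fin d`, which is `binom(N+d-1, d-1)`.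
-/

open Matrix Kronecker BigOperators ComplexOrder

noncomputable section

/-- The matrix of the permutation `π ∈ S_M` acting on the `M` tensor factors of `(ℂ^d)^{⊗M}`. -/
def permMat (d M : ℕ) (π : Equiv.Perm (Fin M)) :
    Matrix (Fin M → Fin d) (Fin M → Fin d) ℂ :=
  Matrix.of fun x y => if x = y ∘ π.symm then 1 else 0

/-- The orthogonal projector onto the symmetric subspace of `(ℂ^d)^{⊗M}`. -/
def symProj (d M : ℕ) : Matrix (Fin M → Fin d) (Fin M → Fin d) ℂ :=
  ((M.factorial : ℂ))⁻¹ • ∑ π : Equiv.Perm (Fin M), permMat d M π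

/-- The dimension `d_S^M = binom(M+d-1, d-1)` of the symmetric subspace of `(ℂ^d)^{⊗M}`. -/
def dS (d M : ℕ) : ℕ := (M + d - 1).choose (d - 1)

/-- Regard a pair of tuples as a single tuple via `Fin (N+K) ≃ Fin N ⊕ Fin K`. -/
def pairToFun (d N K : ℕ) (x : Fin N → Fin d) (o : Fin K → Fin d) :
    Fin (N + K) → Fin d :=
  fun i => Sum.elim x o (finSumFinEquiv.symm i)

/-- The projector onto the symmetric subspace of `(ℂ^d)^{⊗(N+K)}`, regarded as a matrix
indexed by pairs `((x,o),(x',o'))`. -/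
def symProjNK (d N K : ℕ) :
    Matrix ((Fin N → Fin d) × (Fin K → Fin d)) ((Fin N → Fin d) × (Fin K → Fin d)) ℂ :=
  Matrix.of fun p q =>
    symProj d (N + K) (pairToFun d N K p.1 p.2) (pairToFun d N K q.1 q.2)

/-- Partial trace over the output (second) factor. -/
def trOut {d N K : ℕ}
    (J : Matrix ((Fin N → Fin d) × (Fin K → Fin d)) ((Fin N → Fin d) × (Fin K → Fin d)) ℂ) :
    Matrix (Fin N → Fin d) (Fin N → Fin d) ℂ :=
  Matrix.of fun x x' => ∑ o : Fin K → Fin d, J (x, o) (x', o)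

section StarProjection

variable {R : Type*} [CommRing R] [StarRing R] {l m n : Type*} [Fintype l] [Fintype m] [Fintype n]

theorem IsStarProjection.submatrix_equiv {P : Matrix m m R}
    (hP : IsStarProjection P) (e : l ≃ m) : IsStarProjection (P.submatrix e e) where
  isIdempotentElem := by
    rw [IsIdempotentElem, Matrix.submatrix_mul_equiv, hP.isIdempotentElem.eq]
  isSelfAdjoint := by
    rw [IsSelfAdjoint, Matrix.star_eq_conjTranspose, Matrix.conjTranspose_submatrix,
      ← Matrix.star_eq_conjTranspose, hP.isSelfAdjoint.star_eq]

theorem IsStarProjection.kronecker {P : Matrix m m R} {Q : Matrix n n R}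
    (hP : IsStarProjection P) (hQ : IsStarProjection Q) : IsStarProjection (P ⊗ₖ Q) where
  isIdempotentElem := by
    rw [IsIdempotentElem, ← Matrix.mul_kronecker_mul, hP.isIdempotentElem.eq,
      hQ.isIdempotentElem.eq]
  isSelfAdjoint := by
    rw [IsSelfAdjoint, Matrix.star_eq_conjTranspose, Matrix.conjTranspose_kronecker,
      ← Matrix.star_eq_conjTranspose, ← Matrix.star_eq_conjTranspose, hP.isSelfAdjoint.star_eq,
      hQ.isSelfAdjoint.star_eq]

end StarProjection

theorem Matrix.PosSemidef.trace_mul_nonneg_of_isStarProjection {𝕜 n : Type*} [RCLike 𝕜]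
    [Fintype n] {J P : Matrix n n 𝕜} (hJ : J.PosSemidef) (hP : IsStarProjection P) :
    0 ≤ (J * P).trace := by
  have hP' : Pᴴ = P := hP.isSelfAdjoint.star_eq
  have := (hJ.conjTranspose_mul_mul_same P).trace_nonneg
  rwa [hP', Matrix.mul_assoc, Matrix.trace_mul_comm, Matrix.mul_assoc,
    hP.isIdempotentElem.eq] at this

section PermutationMatrices

variable {d M : ℕ}

theorem permMat_apply (σ : Equiv.Perm (Fin M)) (x y : Fin M → Fin d) :
    permMat d M σ x y = if x ∘ σ = y then 1 else 0 := by
  simp only [permMat, Matrix.of_apply, Equiv.eq_comp_symm]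

theorem permMat_mul_apply {n : Type*} (σ : Equiv.Perm (Fin M))
    (A : Matrix (Fin M → Fin d) n ℂ) (x : Fin M → Fin d) (j : n) :
    (permMat d M σ * A) x j = A (x ∘ σ) j := by
  simp only [Matrix.mul_apply, permMat_apply, ite_mul, one_mul, zero_mul,
    Finset.sum_ite_eq, Finset.mem_univ, if_true]

theorem permMat_mul (σ τ : Equiv.Perm (Fin M)) :
    permMat d M σ * permMat d M τ = permMat d M (σ * τ) := by
  ext x y
  rw [permMat_mul_apply, permMat_apply, permMat_apply, Equiv.Perm.coe_mul, Function.comp_assoc]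

theorem permMat_conjTranspose (σ : Equiv.Perm (Fin M)) :
    (permMat d M σ)ᴴ = permMat d M σ⁻¹ := by
  ext x y
  simp only [Matrix.conjTranspose_apply, permMat_apply, apply_ite star, star_one, star_zero,
    Equiv.Perm.inv_def]
  exact if_congr (eq_comm.trans (Equiv.comp_symm_eq σ y x).symm) rfl rfl

theorem trace_permMat (σ : Equiv.Perm (Fin M)) :
    (permMat d M σ).trace = Fintype.card {x : Fin M → Fin d // x ∘ σ = x} := by
  simp only [Matrix.trace, Matrix.diag, permMat_apply, Finset.sum_boole, Fintype.card_subtype]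

theorem inv_factorial_smul_sum_const {α : Type*} [AddCommGroup α] [Module ℂ α] (a : α) :
    ((M.factorial : ℂ))⁻¹ • ∑ _σ : Equiv.Perm (Fin M), a = a := by
  rw [Finset.sum_const, Finset.card_univ, Fintype.card_perm, Fintype.card_fin,
    ← Nat.cast_smul_eq_nsmul ℂ, smul_smul, inv_mul_cancel₀ (by exact_mod_cast M.factorial_ne_zero),
    one_smul]

theorem permMat_mul_symProj (σ : Equiv.Perm (Fin M)) :
    permMat d M σ * symProj d M = symProj d M := by
  rw [symProj, Matrix.mul_smul, Matrix.mul_sum]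
  simp only [permMat_mul]
  congr 1
  exact Fintype.sum_equiv (Equiv.mulLeft σ) _ _ fun _ => rfl

theorem isStarProjection_symProj : IsStarProjection (symProj d M) where
  isIdempotentElem := by
    rw [IsIdempotentElem]
    nth_rewrite 1 [symProj]
    rw [Matrix.smul_mul, Matrix.sum_mul]
    simp only [permMat_mul_symProj]
    exact inv_factorial_smul_sum_const _
  isSelfAdjoint := by
    rw [IsSelfAdjoint, Matrix.star_eq_conjTranspose, symProj, Matrix.conjTranspose_smul,
      Matrix.conjTranspose_sum]
    simp only [permMat_conjTranspose, star_inv₀, star_natCast]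
    congr 1
    exact Fintype.sum_equiv (Equiv.inv _) _ _ fun _ => rfl

end PermutationMatrices

section TupleOrbits

variable {α : Type*} {M : ℕ}

def tupleSym (x : Fin M → α) : Sym α M :=
  ⟨List.ofFn x, by simp⟩

theorem tupleSym_comp_perm (x : Fin M → α) (σ : Equiv.Perm (Fin M)) :
    tupleSym (x ∘ σ) = tupleSym x :=
  Subtype.ext (Multiset.coe_eq_coe.2 (σ.ofFn_comp_perm x))

theorem tupleSym_surjective : Function.Surjective (tupleSym (α := α) (M := M)) := by
  rintro ⟨m, hm⟩
  induction m using Quot.ind with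
  | mk l =>
    obtain rfl : l.length = M := hm
    exact ⟨l.get, Subtype.ext (congrArg ((↑) : List α → Multiset α) (List.ofFn_get l))⟩

theorem exists_perm_of_tupleSym_eq [LinearOrder α] {x y : Fin M → α}
    (h : tupleSym x = tupleSym y) : ∃ σ : Equiv.Perm (Fin M), y ∘ σ = x := by
  have hperm : (List.ofFn x).Perm (List.ofFn y) := Multiset.coe_eq_coe.1 (congrArg Subtype.val h)
  have hsorted : x ∘ Tuple.sort x = y ∘ Tuple.sort y :=
    List.ofFn_injective <|
      (((Tuple.sort x).ofFn_comp_perm x).trans (hperm.trans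
        ((Tuple.sort y).ofFn_comp_perm y).symm)).eq_of_pairwise'
        (Tuple.monotone_sort x).sortedLE_ofFn.pairwise
        (Tuple.monotone_sort y).sortedLE_ofFn.pairwise
  refine ⟨Tuple.sort y * (Tuple.sort x)⁻¹, ?_⟩
  rw [Equiv.Perm.coe_mul, ← Function.comp_assoc, ← hsorted, Function.comp_assoc,
    ← Equiv.Perm.coe_mul, mul_inv_cancel, Equiv.Perm.coe_one, Function.comp_id]

theorem sum_card_fixed_tuples [Fintype α] [LinearOrder α] :
    ∑ σ : Equiv.Perm (Fin M), Fintype.card {x : Fin M → α // x ∘ σ = x}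
      = (Fintype.card α).multichoose M * M.factorial := by
  classical
  let _ := arrowAction (G := Equiv.Perm (Fin M)) (A := Fin M) (B := α)
  have hsmul : ∀ (σ : Equiv.Perm (Fin M)) (x : Fin M → α), σ • x = x ∘ ⇑σ⁻¹ := fun _ _ => rfl
  have horbits : MulAction.orbitRel.Quotient (Equiv.Perm (Fin M)) (Fin M → α) ≃ Sym α M := by
    refine Equiv.ofBijective (Quotient.lift tupleSym ?_) ⟨?_, ?_⟩
    · rintro x y ⟨σ, rfl⟩
      exact tupleSym_comp_perm y σ⁻¹
    · rintro ⟨x⟩ ⟨y⟩ h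
      obtain ⟨σ, hσ⟩ := exists_perm_of_tupleSym_eq h
      exact Quotient.sound ⟨σ⁻¹, show y ∘ ⇑σ⁻¹⁻¹ = x by rw [inv_inv, hσ]⟩
    · intro s
      obtain ⟨x, rfl⟩ := tupleSym_surjective s
      exact ⟨⟦x⟧, rfl⟩
  have hfixed : ∀ σ : Equiv.Perm (Fin M), Fintype.card {x : Fin M → α // x ∘ σ = x}
      = Fintype.card (MulAction.fixedBy (Fin M → α) σ⁻¹) := by
    intro σ
    refine Fintype.card_congr (Equiv.subtypeEquivRight fun x => ?_)
    rw [MulAction.mem_fixedBy, hsmul, inv_inv]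
  rw [Fintype.sum_equiv (Equiv.inv _) _ (fun σ => Fintype.card (MulAction.fixedBy _ σ)) hfixed,
    MulAction.sum_card_fixedBy_eq_card_orbits_mul_card_group, Fintype.card_congr horbits,
    Sym.card_sym_eq_multichoose, Fintype.card_perm, Fintype.card_fin]

end TupleOrbits

theorem trace_symProj {d M : ℕ} (hd : 1 ≤ d) : (symProj d M).trace = dS d M := by
  rw [symProj, Matrix.trace_smul, Matrix.trace_sum]
  simp only [trace_permMat]
  rw [← Nat.cast_sum, sum_card_fixed_tuples, Fintype.card_fin, Nat.cast_mul, smul_eq_mul,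
    mul_comm, mul_inv_cancel_right₀ (by exact_mod_cast M.factorial_ne_zero), Nat.multichoose_eq,
    dS, show d + M - 1 = (d - 1) + M by omega, ← Nat.choose_symm_add,
    show d - 1 + M = M + d - 1 by omega]

section Bipartite

variable {d N K : ℕ}

def pairEquiv (d N K : ℕ) : (Fin N → Fin d) × (Fin K → Fin d) ≃ (Fin (N + K) → Fin d) :=
  (Equiv.sumArrowEquivProdArrow _ _ _).symm.trans (finSumFinEquiv.arrowCongr (Equiv.refl _))

theorem symProjNK_eq_submatrix :
    symProjNK d N K = (symProj d (N + K)).submatrix (pairEquiv d N K) (pairEquiv d N K) :=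
  rfl

theorem isStarProjection_symProjNK : IsStarProjection (symProjNK d N K) := by
  rw [symProjNK_eq_submatrix]
  exact isStarProjection_symProj.submatrix_equiv _

def extendPerm (K : ℕ) (π : Equiv.Perm (Fin N)) : Equiv.Perm (Fin (N + K)) :=
  finSumFinEquiv.permCongr (π.sumCongr (Equiv.refl (Fin K)))

theorem pairEquiv_comp_extendPerm (x : Fin N → Fin d) (o : Fin K → Fin d)
    (π : Equiv.Perm (Fin N)) :
    pairEquiv d N K (x, o) ∘ extendPerm K π = pairEquiv d N K (x ∘ π, o) := by
  funext i
  show pairToFun d N K x o (extendPerm K π i) = pairToFun d N K (x ∘ π) o i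
  simp only [pairToFun, extendPerm, Equiv.permCongr_apply, Equiv.symm_apply_apply]
  cases finSumFinEquiv.symm i <;> rfl

theorem permMat_kronecker_one (π : Equiv.Perm (Fin N)) :
    permMat d N π ⊗ₖ (1 : Matrix (Fin K → Fin d) (Fin K → Fin d) ℂ)
      = (permMat d (N + K) (extendPerm K π)).submatrix (pairEquiv d N K) (pairEquiv d N K) := by
  ext ⟨x, o⟩ ⟨y, o'⟩
  simp only [Matrix.kroneckerMap_apply, Matrix.submatrix_apply, permMat_apply, Matrix.one_apply,
    pairEquiv_comp_extendPerm, (pairEquiv d N K).apply_eq_iff_eq, Prod.mk.injEq, ite_and, ite_mul,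
    one_mul, zero_mul]

theorem symProj_kronecker_one_mul_symProjNK :
    (symProj d N ⊗ₖ (1 : Matrix (Fin K → Fin d) (Fin K → Fin d) ℂ)) * symProjNK d N K
      = symProjNK d N K := by
  have hsum : (∑ π, permMat d N π) ⊗ₖ (1 : Matrix (Fin K → Fin d) (Fin K → Fin d) ℂ)
      = ∑ π, permMat d N π ⊗ₖ 1 := by
    ext; simp only [Matrix.kroneckerMap_apply, Matrix.sum_apply, Finset.sum_mul]
  rw [symProj, Matrix.smul_kronecker, hsum, Matrix.smul_mul, Matrix.sum_mul]
  simp only [permMat_kronecker_one, symProjNK_eq_submatrix, Matrix.submatrix_mul_equiv,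
    permMat_mul_symProj]
  exact inv_factorial_smul_sum_const _

theorem trace_mul_kronecker_one
    (J : Matrix ((Fin N → Fin d) × (Fin K → Fin d)) ((Fin N → Fin d) × (Fin K → Fin d)) ℂ)
    (A : Matrix (Fin N → Fin d) (Fin N → Fin d) ℂ) :
    (J * (A ⊗ₖ (1 : Matrix (Fin K → Fin d) (Fin K → Fin d) ℂ))).trace = (trOut J * A).trace := by
  simp only [Matrix.trace, Matrix.diag, Matrix.mul_apply, Matrix.kroneckerMap_apply,
    Matrix.one_apply, trOut, Matrix.of_apply, Fintype.sum_prod_type, mul_ite, mul_one, mul_zero,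
    Finset.sum_mul, Finset.sum_ite_eq', Finset.mem_univ, if_true]
  exact Finset.sum_congr rfl fun _ _ => Finset.sum_comm

end Bipartite

theorem stmt0_general (d N K : ℕ) (hd : 2 ≤ d)
    (J : Matrix ((Fin N → Fin d) × (Fin K → Fin d)) ((Fin N → Fin d) × (Fin K → Fin d)) ℂ)
    (hpsd : J.PosSemidef) (htp : trOut J = 1) :
    (J * symProjNK d N K).trace ≤ (dS d N : ℂ) := by
  have hgap : IsStarProjection (symProj d N ⊗ₖ 1 - symProjNK d N K) :=
    isStarProjection_symProjNK.sub_of_mul_eq_right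
      (isStarProjection_symProj.kronecker (IsStarProjection.one _))
      symProj_kronecker_one_mul_symProjNK
  calc (J * symProjNK d N K).trace ≤ (J * (symProj d N ⊗ₖ 1)).trace := by
        have := hpsd.trace_mul_nonneg_of_isStarProjection hgap
        rwa [Matrix.mul_sub, Matrix.trace_sub, sub_nonneg] at this
    _ = (symProj d N).trace := by rw [trace_mul_kronecker_one, htp, Matrix.one_mul]
    _ = dS d N := trace_symProj (by omega)

/-- The average fidelity of any `N → K` transposition channel, with Choi operator `J`,
is at most `d_S^N / d_S^{N+K}`; equivalently `Tr(J Π_sym^{(N+K)}) ≤ d_S^N`. -/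
theorem stmt0 (d N K : ℕ) (hd : 2 ≤ d) (hN : 1 ≤ N) (hK : 1 ≤ K)
    (J : Matrix ((Fin N → Fin d) × (Fin K → Fin d)) ((Fin N → Fin d) × (Fin K → Fin d)) ℂ)
    (hpsd : J.PosSemidef) (htp : trOut J = 1) :
    (J * symProjNK d N K).trace ≤ (dS d N : ℂ) :=
  stmt0_general d N K hd J hpsd htp

end
end

section
/- Fix integers d ≥ 1, N ≥ 1, K ≥ 1. The partial trace over the last K tensor factors of the symmetric projector satisfies Tr_O(Π_sym^{(N+K)}) = (d_S^{N+K} / d_S^N) · Π_sym^{(N)}, where Tr_O(J)(x,x') := ∑_o J((x,o),(x',o)) for o ranging over Fin K → Fin d. -/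
open Matrix Kronecker BigOperators ComplexOrder

noncomputable section

/-!
The entry of `Π_sym^{(M)}` at `(f, g)` vanishes unless `f` and `g` have the same occupation
numbers `m : Fin d → ℕ`, and then equals `∏_b m_b! / M!` (the number of permutations carrying
`g` to `f`, divided by `M!`). Written as `(d-1)! · d_S^M · w(m)` with
`w(m) = ∏_b m_b! / (|m| + d - 1)!`, the theorem reduces to `∑_{o ∈ [d]^K} w(m + occ o) = w(m)`.
By induction on `K` this follows from `∑_a w(m + e_a) = w(m)`, which holds because
`∑_a (m_a + 1) = |m| + d`.
-/

open Finset Equiv Nat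

section FiberCard

variable {ι ι' β : Type*} [Fintype ι] [Fintype ι'] [DecidableEq β]

def fiberCard (f : ι → β) (b : β) : ℕ := Fintype.card {i // f i = b}

lemma fiberCard_eq_sum_ite (f : ι → β) (b : β) :
    fiberCard f b = ∑ i, if f i = b then 1 else 0 := by
  rw [fiberCard, Fintype.card_subtype, card_filter]

lemma fiberCard_comp_equiv (f : ι → β) (e : ι' ≃ ι) : fiberCard (f ∘ e) = fiberCard f :=
  funext fun _ => Fintype.card_congr (e.subtypeEquiv fun _ => Iff.rfl)

lemma fiberCard_sumElim (f : ι → β) (g : ι' → β) :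
    fiberCard (Sum.elim f g) = fiberCard f + fiberCard g := by
  funext b
  simp only [fiberCard_eq_sum_ite, Pi.add_apply]
  exact Fintype.sum_sum_type _

lemma fiberCard_cons {K : ℕ} (a : β) (o : Fin K → β) :
    fiberCard (Fin.cons a o : Fin (K + 1) → β) = Pi.single a 1 + fiberCard o := by
  funext b
  simp only [fiberCard_eq_sum_ite, Fin.sum_univ_succ, Fin.cons_zero, Fin.cons_succ, Pi.add_apply,
    Pi.single_apply, eq_comm]

lemma fiberCard_of_isEmpty [IsEmpty ι] (f : ι → β) : fiberCard f = 0 :=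
  funext fun _ => Fintype.card_eq_zero

lemma sum_fiberCard [Fintype β] (f : ι → β) : ∑ b, fiberCard f b = Fintype.card ι := by
  rw [← Fintype.card_congr (sigmaFiberEquiv f), Fintype.card_sigma]
  rfl

lemma exists_perm_comp_eq_of_fiberCard_eq {f g : ι → β} (h : fiberCard f = fiberCard g) :
    ∃ τ : Perm ι, g ∘ τ = f := by
  have e (b : β) : {i // f i = b} ≃ {i // g i = b} := Fintype.equivOfCardEq (congrFun h b)
  exact ⟨ofFiberEquiv e, funext (ofFiberEquiv_map e)⟩

lemma card_perm_comp_eq [DecidableEq ι] [Fintype β] (f g : ι → β) :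
    Fintype.card {τ : Perm ι // g ∘ τ = f}
      = if fiberCard f = fiberCard g then ∏ b, (fiberCard g b)! else 0 := by
  split_ifs with h
  · obtain ⟨τ₀, rfl⟩ := exists_perm_comp_eq_of_fiberCard_eq h
    have hcomp : ∀ σ : Perm ι, g ∘ σ = g ↔ g ∘ ⇑(σ * τ₀) = g ∘ τ₀ := fun σ =>
      (τ₀.surjective.injective_comp_right.eq_iff).symm
    rw [← Fintype.card_congr (subtypeEquiv (Equiv.mulRight τ₀) hcomp), DomMulAct.stabilizer_card]
    rfl
  · refine Fintype.card_eq_zero_iff.mpr ⟨fun ⟨τ, hτ⟩ => h ?_⟩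
    rw [← hτ, fiberCard_comp_equiv]

end FiberCard

section OccupationWeight

variable (𝕜 : Type*) [Field 𝕜] [CharZero 𝕜] {β : Type*} [Fintype β] [DecidableEq β]

def occupationWeight (m : β → ℕ) : 𝕜 :=
  (∏ b, ((m b)! : 𝕜)) / ((∑ b, m b) + Fintype.card β - 1)!

lemma prod_factorial_add_single (m : β → ℕ) (a : β) :
    ∏ b, ((m + Pi.single a 1 : β → ℕ) b)! = (m a + 1) * ∏ b, (m b)! := by
  rw [← mul_prod_erase _ _ (mem_univ a), ← mul_prod_erase _ (fun b => (m b)!) (mem_univ a),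
    prod_congr rfl fun b hb => by
      rw [Pi.add_apply, Pi.single_eq_of_ne (ne_of_mem_erase hb), add_zero]]
  simp [Nat.factorial_succ, mul_assoc]

lemma mul_occupationWeight_add_single [Nonempty β] (m : β → ℕ) (a : β) :
    ((∑ b, m b + Fintype.card β : ℕ) : 𝕜) * occupationWeight 𝕜 (m + Pi.single a 1)
      = (m a + 1) * occupationWeight 𝕜 m := by
  have hsum : ∑ b, (m + Pi.single a 1 : β → ℕ) b = ∑ b, m b + 1 := by
    simp [sum_add_distrib]
  have hcard : 0 < Fintype.card β := Fintype.card_pos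
  have hfact : (∑ b, m b + 1 + Fintype.card β - 1)! = (∑ b, m b + Fintype.card β)
      * (∑ b, m b + Fintype.card β - 1)! := by
    rw [Nat.mul_factorial_pred (by omega), Nat.add_right_comm, Nat.add_sub_cancel]
  have hprod := congrArg (Nat.cast : ℕ → 𝕜) (prod_factorial_add_single m a)
  push_cast at hprod
  have hpos : ((∑ b, m b + Fintype.card β : ℕ) : 𝕜) ≠ 0 := Nat.cast_ne_zero.mpr (by positivity)
  rw [occupationWeight, occupationWeight, hsum, hprod, hfact, Nat.cast_mul]
  field_simp

lemma sum_occupationWeight_add_single [Nonempty β] (m : β → ℕ) :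
    ∑ a, occupationWeight 𝕜 (m + Pi.single a 1) = occupationWeight 𝕜 m := by
  have hpos : ((∑ b, m b + Fintype.card β : ℕ) : 𝕜) ≠ 0 := Nat.cast_ne_zero.mpr (by positivity)
  refine mul_left_cancel₀ hpos ?_
  rw [mul_sum, sum_congr rfl fun a _ => mul_occupationWeight_add_single 𝕜 m a, ← sum_mul]
  simp [sum_add_distrib]

lemma sum_occupationWeight_add_fiberCard [Nonempty β] (K : ℕ) (m : β → ℕ) :
    ∑ o : Fin K → β, occupationWeight 𝕜 (m + fiberCard o) = occupationWeight 𝕜 m := by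
  induction K generalizing m with
  | zero => simp [fiberCard_of_isEmpty]
  | succ K ih =>
    rw [← (Fin.consEquiv fun _ => β).sum_comp, Fintype.sum_prod_type]
    simp only [Fin.consEquiv, Equiv.coe_fn_mk, fiberCard_cons, ← add_assoc, ih]
    exact sum_occupationWeight_add_single 𝕜 m

end OccupationWeight

lemma symProj_apply (d M : ℕ) (f g : Fin M → Fin d) :
    symProj d M f g = (M ! : ℂ)⁻¹ * Fintype.card {τ : Perm (Fin M) // g ∘ τ = f} := by
  simp only [symProj, Matrix.smul_apply, Matrix.sum_apply, permMat, Matrix.of_apply, smul_eq_mul,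
    Fintype.card_subtype, card_filter]
  push_cast
  congr 1
  exact Fintype.sum_equiv (Equiv.inv _) _ _ fun π => if_congr eq_comm rfl rfl

lemma factorial_mul_dS (d M : ℕ) [NeZero d] : (d - 1)! * dS d M * M ! = (M + d - 1)! := by
  rw [dS, show M + d - 1 = M + (d - 1) by have := NeZero.pos d; omega,
    ← Nat.add_choose_mul_factorial_mul_factorial M (d - 1)]
  ring

lemma dS_pos (d M : ℕ) [NeZero d] : 0 < dS d M :=
  Nat.choose_pos (by have := NeZero.pos d; omega)

lemma symProj_apply_eq_occupationWeight (d M : ℕ) [NeZero d] (f g : Fin M → Fin d) :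
    symProj d M f g = if fiberCard f = fiberCard g then
      ((d - 1)! * dS d M : ℂ) * occupationWeight ℂ (fiberCard g) else 0 := by
  rw [symProj_apply, card_perm_comp_eq]
  split_ifs
  · have hdS : (dS d M : ℂ) ≠ 0 := by exact_mod_cast (dS_pos d M).ne'
    have hfact := congrArg (Nat.cast : ℕ → ℂ) (factorial_mul_dS d M)
    push_cast at hfact
    rw [occupationWeight, sum_fiberCard, Fintype.card_fin, Fintype.card_fin, ← hfact]
    push_cast
    field_simp
  · simp

lemma fiberCard_pairToFun (d N K : ℕ) (x : Fin N → Fin d) (o : Fin K → Fin d) :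
    fiberCard (pairToFun d N K x o) = fiberCard x + fiberCard o := by
  rw [show pairToFun d N K x o = Sum.elim x o ∘ finSumFinEquiv.symm from rfl,
    fiberCard_comp_equiv, fiberCard_sumElim]

theorem stmt3_general (d N K : ℕ) (hd : 1 ≤ d) :
    trOut (symProjNK d N K) = ((dS d (N + K) : ℂ) / (dS d N : ℂ)) • symProj d N := by
  have : NeZero d := ⟨by omega⟩
  ext x x'
  simp only [trOut, symProjNK, Matrix.of_apply, Matrix.smul_apply, smul_eq_mul,
    symProj_apply_eq_occupationWeight, fiberCard_pairToFun, add_left_inj]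
  split_ifs
  · rw [← mul_sum, sum_occupationWeight_add_fiberCard]
    have hdS : (dS d N : ℂ) ≠ 0 := by exact_mod_cast (dS_pos d N).ne'
    field_simp
  · simp

/-- Partial trace of the symmetric projector over the last `K` factors:
`Tr_O(Π_sym^{(N+K)}) = (d_S^{N+K} / d_S^N) Π_sym^{(N)}`. -/
theorem stmt3 (d N K : ℕ) (hd : 1 ≤ d) (hN : 1 ≤ N) (hK : 1 ≤ K) :
    trOut (symProjNK d N K) = ((dS d (N + K) : ℂ) / (dS d N : ℂ)) • symProj d N :=
  stmt3_general d N K hd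

end
end

section
/- Fix n ≥ 1. In the group algebra ℂ[S_n] of the symmetric group on Fin n, the Jucys–Murphy elements J_1, …, J_n commute pairwise: J_k J_ℓ = J_ℓ J_k for all 1 ≤ k, ℓ ≤ n. -/
open BigOperators

noncomputable section

/-- The Jucys–Murphy element `J_k ∈ ℂ[S_n]` (0-indexed: `JM n 0 = 0` corresponds to
`J_1 = 0`, and `JM n k = ∑_{r < k} (r k)` corresponds to `J_{k+1}`). -/
def JM (n : ℕ) (k : Fin n) : MonoidAlgebra ℂ (Equiv.Perm (Fin n)) :=
  ∑ r ∈ Finset.univ.filter (fun r : Fin n => r < k),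
    MonoidAlgebra.of ℂ (Equiv.Perm (Fin n)) (Equiv.swap r k)

lemma swap_comm_JM (n : ℕ) (r k l : Fin n) (hrk : r < k) (hkl : k < l) :
    MonoidAlgebra.of ℂ (Equiv.Perm (Fin n)) (Equiv.swap r k) * JM n l
      = JM n l * MonoidAlgebra.of ℂ (Equiv.Perm (Fin n)) (Equiv.swap r k) := by
  unfold JM
  rw [Finset.mul_sum, Finset.sum_mul]
  have hσl : Equiv.swap r k l = l :=
    Equiv.swap_apply_of_ne_of_ne (ne_of_gt (hrk.trans hkl)) (ne_of_gt hkl)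
  have hmem : ∀ s : Fin n, s < l → Equiv.swap r k s < l := by
    intro s hs
    rcases eq_or_ne s r with rfl | hsr
    · rwa [Equiv.swap_apply_left]
    rcases eq_or_ne s k with rfl | hsk
    · rw [Equiv.swap_apply_right]; exact hrk.trans hkl
    · rwa [Equiv.swap_apply_of_ne_of_ne hsr hsk]
  refine Finset.sum_nbij' (fun s => Equiv.swap r k s) (fun s => Equiv.swap r k s)
    ?_ ?_ ?_ ?_ ?_
  · intro s hs
    simp only [Finset.mem_filter, Finset.mem_univ, true_and] at hs ⊢
    exact hmem s hs
  · intro s hs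
    simp only [Finset.mem_filter, Finset.mem_univ, true_and] at hs ⊢
    exact hmem s hs
  · intro s _; exact Equiv.swap_apply_self _ _ _
  · intro s _; exact Equiv.swap_apply_self _ _ _
  · intro s _
    rw [← map_mul, ← map_mul]
    congr 1
    have := Equiv.swap_apply_apply (Equiv.swap r k) s l
    rw [hσl] at this
    rw [this]
    group

/-- The Jucys–Murphy elements of `ℂ[S_n]` commute pairwise. -/
theorem stmt11 (n : ℕ) (hn : 1 ≤ n) (k l : Fin n) :
    JM n k * JM n l = JM n l * JM n k := by
  have key : ∀ k l : Fin n, k < l → JM n k * JM n l = JM n l * JM n k := by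
    intro k l hkl
    conv_lhs => lhs; rw [JM]
    conv_rhs => rhs; rw [JM]
    rw [Finset.sum_mul, Finset.mul_sum]
    refine Finset.sum_congr rfl fun r hr => ?_
    simp only [Finset.mem_filter, Finset.mem_univ, true_and] at hr
    exact swap_comm_JM n r k l hr hkl
  rcases lt_trichotomy k l with h | rfl | h
  · exact key k l h
  · rfl
  · exact (key l k h).symm

end
end

section
/- Fix integers d ≥ 1, N ≥ 1, and let A be a complex matrix indexed by (Fin N → Fin d). Suppose that for every vector ψ : Fin d → ℂ one has ⟨ψ^{⊗N}, A ψ^{⊗N}⟩ = 0. Then ⟨ψ₀^{⊗N}, A ψ₁^{⊗N}⟩ = 0 for all vectors ψ₀, ψ₁ : Fin d → ℂ, and consequently ⟨φ, A φ⟩ = 0 for every vector φ in the linear span of { ψ^{⊗N} : ψ : Fin d → ℂ } (the symmetric subspace of (ℂ^d)^{⊗N}). -/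
open BigOperators

noncomputable section

/-- The `N`-th tensor power `ψ^{⊗N}` of a vector `ψ : ℂ^d`. -/
def tpow (d N : ℕ) (ψ : Fin d → ℂ) : (Fin N → Fin d) → ℂ :=
  fun x => ∏ i, ψ (x i)

/-- The sesquilinear form `⟨u, A v⟩ = ∑_{x,y} conj(u x) A(x,y) v(y)`. -/
def quadF {d N : ℕ} (u : (Fin N → Fin d) → ℂ)
    (A : Matrix (Fin N → Fin d) (Fin N → Fin d) ℂ) (v : (Fin N → Fin d) → ℂ) : ℂ :=
  ∑ x, ∑ y, (starRingEnd ℂ) (u x) * A x y * v y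

/-!
Expanding `(ψ₀ + t ψ₁)^{⊗N}` over the sets `S` of tensor factors that carry `ψ₀` writes
`⟨(ψ₀ + t ψ₁)^{⊗N}, A (ψ₀ + t ψ₁)^{⊗N}⟩` as `∑ conj(t)^j t^k c_{jk}` with `j, k ≤ N`, and
`⟨ψ₀^{⊗N}, A ψ₁^{⊗N}⟩ = c_{0N}` is the only coefficient with `k - j = N`. On the unit circle
`conj t = t⁻¹`, so averaging `t^{N+1}` times this expression over the `(2N+1)`-st roots of unity
isolates `c_{0N}`, which therefore vanishes. The statement on the span follows by
sesquilinearity.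
-/

open Finset ComplexConjugate

theorem IsPrimitiveRoot.geom_sum_pow_eq {R : Type*} [CommRing R] [IsDomain R] {ζ : R} {n : ℕ}
    (hζ : IsPrimitiveRoot ζ n) (q : ℕ) :
    ∑ m ∈ range n, (ζ ^ q) ^ m = if n ∣ q then (n : R) else 0 := by
  split_ifs with hq
  · simp [(hζ.pow_eq_one_iff_dvd q).2 hq]
  · have hne : ζ ^ q - 1 ≠ 0 := sub_ne_zero.2 (mt (hζ.pow_eq_one_iff_dvd q).1 hq)
    have h := mul_geom_sum (ζ ^ q) n
    rw [← pow_mul, mul_comm q n, pow_mul, hζ.pow_eq_one, one_pow, sub_self] at h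
    exact (mul_eq_zero.1 h).resolve_left hne

theorem Complex.conj_eq_pow_of_pow_succ_eq_one {ζ : ℂ} {k : ℕ} (hζ : ζ ^ (k + 1) = 1) :
    conj ζ = ζ ^ k := by
  rw [← Complex.inv_eq_conj (Complex.norm_eq_one_of_pow_eq_one hζ k.succ_ne_zero)]
  exact inv_eq_of_mul_eq_one_left (by rwa [← pow_succ])

theorem two_mul_add_one_dvd_iff {N a b : ℕ} (ha : a ≤ N) (hb : b ≤ N) :
    2 * N + 1 ∣ 2 * N * a + b + (N + 1) ↔ a = 0 ∧ b = N := by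
  obtain ⟨r, hr⟩ : ∃ r, r + a = N + 1 + b := ⟨N + 1 + b - a, by omega⟩
  have hq : 2 * N * a + b + (N + 1) = (2 * N + 1) * a + r := by linarith
  rw [hq, Nat.dvd_add_right (dvd_mul_right _ _)]
  constructor
  · intro hr_dvd
    have := Nat.eq_of_dvd_of_lt_two_mul (by omega) hr_dvd (by omega)
    omega
  · rintro ⟨rfl, rfl⟩
    exact ⟨1, by omega⟩

theorem eq_zero_of_forall_sum_conj_pow_mul_pow_eq_zero {ι : Type*} [Fintype ι] {N : ℕ}
    {a b : ι → ℕ} (ha : ∀ i, a i ≤ N) (hb : ∀ i, b i ≤ N) {i₀ : ι}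
    (hi₀ : ∀ i, a i = 0 ∧ b i = N ↔ i = i₀) (c : ι → ℂ)
    (h : ∀ t : ℂ, ∑ i, conj t ^ a i * t ^ b i * c i = 0) : c i₀ = 0 := by
  set n := 2 * N + 1
  have hn : n ≠ 0 := Nat.add_one_ne_zero _
  set ω := Complex.exp (2 * Real.pi * Complex.I / n)
  have hω : IsPrimitiveRoot ω n := Complex.isPrimitiveRoot_exp n hn
  have hconj : conj ω = ω ^ (2 * N) := Complex.conj_eq_pow_of_pow_succ_eq_one hω.pow_eq_one
  -- Averaging `t ^ (N + 1) * (∑ …)` over `t = ω ^ m` keeps exactly the terms with `n ∣ q i`.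
  set q : ι → ℕ := fun i => 2 * N * a i + b i + (N + 1)
  have hdvd : ∀ i, n ∣ q i ↔ i = i₀ := fun i =>
    (two_mul_add_one_dvd_iff (ha i) (hb i)).trans (hi₀ i)
  have hsum : ∀ m, ω ^ (m * (N + 1)) * ∑ i, conj (ω ^ m) ^ a i * (ω ^ m) ^ b i * c i =
      ∑ i, (ω ^ q i) ^ m * c i := by
    intro m
    rw [mul_sum]
    refine sum_congr rfl fun i _ => ?_
    rw [map_pow, hconj, ← pow_mul, ← pow_mul, ← pow_mul, ← pow_mul, ← mul_assoc, ← mul_assoc,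
      ← pow_add, ← pow_add]
    congr 2
    ring
  have key : (n : ℂ) * c i₀ = 0 :=
    calc (n : ℂ) * c i₀ = ∑ i, (if n ∣ q i then (n : ℂ) else 0) * c i := by
          rw [Fintype.sum_eq_single i₀ fun i hi => by rw [if_neg (mt (hdvd i).1 hi), zero_mul],
            if_pos ((hdvd i₀).2 rfl)]
      _ = ∑ m ∈ range n, ∑ i, (ω ^ q i) ^ m * c i := by
          simp_rw [← hω.geom_sum_pow_eq, sum_mul]
          exact sum_comm
      _ = 0 := by simp only [← hsum, h, mul_zero, sum_const_zero]
  exact (mul_eq_zero.1 key).resolve_left (Nat.cast_ne_zero.2 hn)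

theorem LinearMap.apply_eq_zero_of_mem_span₂ {R₁ R : Type*} [CommSemiring R₁] [CommSemiring R]
    {σ : R₁ →+* R} {M N P : Type*} [AddCommMonoid M] [AddCommMonoid N] [AddCommMonoid P]
    [Module R₁ M] [Module R N] [Module R P] (B : M →ₛₗ[σ] N →ₗ[R] P) {s : Set M} {t : Set N}
    (h : ∀ x ∈ s, ∀ y ∈ t, B x y = 0) {x : M} {y : N} (hx : x ∈ Submodule.span R₁ s)
    (hy : y ∈ Submodule.span R t) : B x y = 0 := by
  have hs : ∀ x ∈ s, B x y = 0 := fun x hxs =>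
    LinearMap.eqOn_span (f := B x) (g := 0) (fun y hyt => h x hxs y hyt) hy
  exact LinearMap.eqOn_span (f := B.flip y) (g := 0) hs hx

theorem quadF_eq_toLinearMapₛₗ₂' {d N : ℕ} (u : (Fin N → Fin d) → ℂ)
    (A : Matrix (Fin N → Fin d) (Fin N → Fin d) ℂ) (v : (Fin N → Fin d) → ℂ) :
    quadF u A v = Matrix.toLinearMapₛₗ₂' ℂ (starRingEnd ℂ) (RingHom.id ℂ) A u v := by
  simp only [quadF, Matrix.toLinearMapₛₗ₂'_apply, smul_eq_mul, RingHom.id_apply]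
  exact sum_congr rfl fun x _ => sum_congr rfl fun y _ => by ring

theorem LinearMap.sum_smul_sum_smul {ι κ M N : Type*} [Fintype ι] [Fintype κ]
    [AddCommMonoid M] [AddCommMonoid N] [Module ℂ M] [Module ℂ N]
    (B : M →ₗ⋆[ℂ] N →ₗ[ℂ] ℂ) (f : ι → ℂ) (u : ι → M) (g : κ → ℂ) (v : κ → N) :
    B (∑ i, f i • u i) (∑ j, g j • v j) = ∑ p : ι × κ, conj (f p.1) * g p.2 * B (u p.1) (v p.2) := by
  simp only [Fintype.sum_prod_type, map_sum, map_smulₛₗ, LinearMap.sum_apply,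
    LinearMap.smul_apply, smul_eq_mul, RingHom.id_apply, mul_sum]
  rw [sum_comm]
  exact sum_congr rfl fun i _ => sum_congr rfl fun j _ => by ring

def mixedTpow {d N : ℕ} (ψ₀ ψ₁ : Fin d → ℂ) (S : Finset (Fin N)) : (Fin N → Fin d) → ℂ :=
  fun x => (∏ i ∈ S, ψ₀ (x i)) * ∏ i ∈ Sᶜ, ψ₁ (x i)

section mixedTpow

variable {d N : ℕ} (ψ₀ ψ₁ : Fin d → ℂ)

theorem mixedTpow_univ : mixedTpow ψ₀ ψ₁ (univ : Finset (Fin N)) = tpow d N ψ₀ := by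
  funext x
  simp [mixedTpow, tpow]

theorem mixedTpow_empty : mixedTpow ψ₀ ψ₁ (∅ : Finset (Fin N)) = tpow d N ψ₁ := by
  funext x
  simp [mixedTpow, tpow]

theorem tpow_add_smul (t : ℂ) :
    tpow d N (ψ₀ + t • ψ₁) = ∑ S : Finset (Fin N), t ^ #Sᶜ • mixedTpow ψ₀ ψ₁ S := by
  funext x
  simp only [tpow, Pi.add_apply, Pi.smul_apply, smul_eq_mul, Finset.sum_apply, mixedTpow]
  rw [prod_add, powerset_univ]
  refine sum_congr rfl fun S _ => ?_
  rw [← compl_eq_univ_sdiff, prod_mul_distrib, prod_const]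
  ring

end mixedTpow

theorem stmt13_general (d N : ℕ)
    (A : Matrix (Fin N → Fin d) (Fin N → Fin d) ℂ)
    (hA : ∀ ψ : Fin d → ℂ, quadF (tpow d N ψ) A (tpow d N ψ) = 0) :
    (∀ ψ₀ ψ₁ : Fin d → ℂ, quadF (tpow d N ψ₀) A (tpow d N ψ₁) = 0) ∧
    (∀ φ : (Fin N → Fin d) → ℂ,
      φ ∈ Submodule.span ℂ (Set.range (tpow d N)) → quadF φ A φ = 0) := by
  simp only [quadF_eq_toLinearMapₛₗ₂'] at hA ⊢
  set B := Matrix.toLinearMapₛₗ₂' ℂ (starRingEnd ℂ) (RingHom.id ℂ) A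
  have hpow : ∀ ψ₀ ψ₁, B (tpow d N ψ₀) (tpow d N ψ₁) = 0 := by
    intro ψ₀ ψ₁
    have h := eq_zero_of_forall_sum_conj_pow_mul_pow_eq_zero
      (a := fun p : Finset (Fin N) × Finset (Fin N) => #p.1ᶜ) (b := fun p => #p.2ᶜ)
      (i₀ := (univ, ∅)) (N := N) (fun _ => (card_le_univ _).trans_eq (Fintype.card_fin N))
      (fun _ => (card_le_univ _).trans_eq (Fintype.card_fin N))
      (fun p => by rw [Prod.ext_iff, card_eq_zero, compl_eq_empty_iff, ← compl_eq_univ_iff (s := p.2),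
        ← card_eq_iff_eq_univ p.2ᶜ, Fintype.card_fin])
      (fun p => B (mixedTpow ψ₀ ψ₁ p.1) (mixedTpow ψ₀ ψ₁ p.2))
      fun t => by simpa only [tpow_add_smul, B.sum_smul_sum_smul, map_pow] using hA (ψ₀ + t • ψ₁)
    simpa only [mixedTpow_univ, mixedTpow_empty] using h
  refine ⟨hpow, fun φ hφ => B.apply_eq_zero_of_mem_span₂ ?_ hφ hφ⟩
  rintro _ ⟨ψ₀, rfl⟩ _ ⟨ψ₁, rfl⟩
  exact hpow ψ₀ ψ₁

/-- If `⟨ψ^{⊗N}, A ψ^{⊗N}⟩ = 0` for all vectors `ψ`, then all matrix elements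
`⟨ψ₀^{⊗N}, A ψ₁^{⊗N}⟩` vanish, and hence `⟨φ, A φ⟩ = 0` for every `φ` in the symmetric
subspace (the span of the tensor powers). -/
theorem stmt13 (d N : ℕ) (hd : 1 ≤ d) (hN : 1 ≤ N)
    (A : Matrix (Fin N → Fin d) (Fin N → Fin d) ℂ)
    (hA : ∀ ψ : Fin d → ℂ, quadF (tpow d N ψ) A (tpow d N ψ) = 0) :
    (∀ ψ₀ ψ₁ : Fin d → ℂ, quadF (tpow d N ψ₀) A (tpow d N ψ₁) = 0) ∧
    (∀ φ : (Fin N → Fin d) → ℂ,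
      φ ∈ Submodule.span ℂ (Set.range (tpow d N)) → quadF φ A φ = 0) :=
  stmt13_general d N A hA
end
end
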